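/- arXiv:1710.05761 — 3 statements merged into one kernel-verified Lean document; each statement's English description precedes it below -/
import Mathlib

section
/- Let K be a field of characteristic p>0 and N a finitely generated, semipositive binoid with dim N = dim K[N]. Suppose e_HK(𝔫,N) = lim_{q→∞} #(N/[q]𝔫)/q^{dim N} exists, where 𝔫 is an N₊-primary ideal. Then lim_{e→∞} dim_K( K[N]/K[𝔫]^{[p^e]} )/p^{e·dim K[N]} exists and equals e_HK(𝔫,N); in particular this Hilbert-Kunz multiplicity of the binoid algebra is independent of the (positive) characteristic of K. -/
/-- A binoid: a commutative monoid (written additively) with an absorbing element `infty`. -/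
class Binoid (N : Type*) extends AddCommMonoid N where
  infty : N
  add_infty : ∀ x : N, x + infty = infty

namespace Binoid

variable {N : Type*} [Binoid N]

theorem infty_add (x : N) : (infty : N) + x = infty := by
  rw [add_comm]; exact add_infty x

/-- `I ⊆ N` is an ideal of the binoid `N`. -/
def IsIdeal (I : Set N) : Prop :=
  (infty : N) ∈ I ∧ ∀ a ∈ I, ∀ n : N, n + a ∈ I

/-- The ideal generated by a subset `S` of a binoid. -/
def span (S : Set N) : Set N :=
  insert (infty : N) {x : N | ∃ n : N, ∃ s ∈ S, x = n + s}

/-- The `q`-th Frobenius sum `[q]I` of an ideal: the ideal generated by `{q • a | a ∈ I}`. -/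
def frob (q : ℕ) (I : Set N) : Set N :=
  span {x : N | ∃ a ∈ I, x = q • a}

/-- The set of units of a binoid. -/
def unitSet (N : Type*) [Binoid N] : Set N := {a : N | ∃ b : N, a + b = 0}

/-- `N₊`, the set (ideal) of non-units of a binoid. -/
def plusSet (N : Type*) [Binoid N] : Set N := (unitSet N)ᶜ

/-- A binoid is semipositive if its unit group is finite. -/
def Semipositive (N : Type*) [Binoid N] : Prop := (unitSet N).Finite

/-- A binoid is positive if `0` is its only unit. -/
def Positive (N : Type*) [Binoid N] : Prop := unitSet N = {0}

/-- A binoid is finitely generated if it is generated, as a (commutative) monoid,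
by finitely many elements. -/
def FG (N : Type*) [Binoid N] : Prop :=
  ∃ s : Finset N, AddSubmonoid.closure (s : Set N) = ⊤

/-- A binoid is cancellative if `a + c = b + c` with `c ≠ ∞` implies `a = b`. -/
def Cancellative (N : Type*) [Binoid N] : Prop :=
  ∀ a b c : N, c ≠ infty → a + c = b + c → a = b

/-- A binoid is reduced if `∞` is its only nilpotent element. -/
def Reduced (N : Type*) [Binoid N] : Prop :=
  ∀ (a : N) (n : ℕ), 0 < n → n • a = (infty : N) → a = infty

/-- A binoid is torsion-free if `n • a = n • b` for some `n ≥ 1` implies `a = b`. -/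
def TorsionFree (N : Type*) [Binoid N] : Prop :=
  ∀ (a b : N) (n : ℕ), 0 < n → n • a = n • b → a = b

/-- A binoid is integral if `N ∖ {∞}` is a submonoid. -/
def Integral (N : Type*) [Binoid N] : Prop :=
  (0 : N) ≠ infty ∧ ∀ a b : N, a + b = (infty : N) → a = infty ∨ b = infty

/-- The radical of an ideal of a binoid. -/
def rad (I : Set N) : Set N := {a : N | ∃ k : ℕ, 0 < k ∧ k • a ∈ I}

/-- An `N₊`-primary ideal: an ideal whose radical is `N₊`. -/
def IsPrimaryIdeal (I : Set N) : Prop := IsIdeal I ∧ rad I = plusSet N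

/-- A prime ideal of a binoid: a proper ideal whose complement is closed under addition. -/
def IsPrime (I : Set N) : Prop :=
  IsIdeal I ∧ I ≠ Set.univ ∧ ∀ a b : N, a ∉ I → b ∉ I → a + b ∉ I

/-- A minimal prime ideal of a binoid. -/
def IsMinimalPrime (I : Set N) : Prop :=
  IsPrime I ∧ ∀ J : Set N, IsPrime J → J ⊆ I → J = I

/-- The set of lengths of strictly increasing chains of prime ideals of `N`. -/
def dimSet (N : Type*) [Binoid N] : Set ℕ :=
  {n : ℕ | ∃ c : Fin (n + 1) → Set N, (∀ i, IsPrime (c i)) ∧ StrictMono c}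

/-- The combinatorial dimension of a binoid: the supremum of the lengths of strictly
increasing chains of prime ideals. -/
noncomputable def dim (N : Type*) [Binoid N] : ℕ := sSup (dimSet N)

/-- `#(N/[q]𝔫)`: the number of elements of the binoid `N/[q]𝔫`, not counting `∞`;
equivalently, the number of elements of `N` outside of the ideal `[q]𝔫`. -/
noncomputable def hkOn (I : Set N) (q : ℕ) : ℕ := Set.ncard ((frob q I)ᶜ)

/-- The Hilbert–Kunz multiplicity of an (`N₊`-primary) ideal `𝔫` on `N` is `L`:
the limit of `#(N/[q]𝔫)/q^(dim N)` as `q → ∞` is `L`. -/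
def IsHKMultOn (I : Set N) (L : ℝ) : Prop :=
  Filter.Tendsto (fun q : ℕ => (hkOn I q : ℝ) / (q : ℝ) ^ dim N) Filter.atTop (nhds L)

/-- The Hilbert–Kunz multiplicity of the binoid `N` is `L`. -/
def IsHKMult (N : Type*) [Binoid N] (L : ℝ) : Prop :=
  IsHKMultOn (plusSet N) L

/-- The sum `I + J` of two subsets of a binoid. -/
def idealSum (I J : Set N) : Set N := {x : N | ∃ a ∈ I, ∃ b ∈ J, x = a + b}


/-- The binoid algebra `K[N]`: the monoid algebra of `N` over `K` modulo the ideal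
generated by `X^∞`. -/
noncomputable def binAlg (K : Type*) [CommRing K] (N : Type*) [Binoid N] : Type _ :=
  AddMonoidAlgebra K N ⧸
    Ideal.span {AddMonoidAlgebra.single (infty : N) (1 : K)}

noncomputable instance (K : Type*) [CommRing K] (N : Type*) [Binoid N] :
    CommRing (binAlg K N) :=
  inferInstanceAs (CommRing (AddMonoidAlgebra K N ⧸
    Ideal.span {AddMonoidAlgebra.single (infty : N) (1 : K)}))

noncomputable instance (K : Type*) [CommRing K] (N : Type*) [Binoid N] :
    Algebra K (binAlg K N) :=
  inferInstanceAs (Algebra K (AddMonoidAlgebra K N ⧸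
    Ideal.span {AddMonoidAlgebra.single (infty : N) (1 : K)}))

/-- The monomial `X^a` in the binoid algebra `K[N]`. -/
noncomputable def monomial (K : Type*) [CommRing K] (a : N) : binAlg K N :=
  Ideal.Quotient.mk _ (AddMonoidAlgebra.single a (1 : K))

/-- For an ideal `I` of the binoid `N`, the ideal `K[I]` of `K[N]` spanned by the
monomials `X^a`, `a ∈ I`. -/
noncomputable def idealK (K : Type*) [CommRing K] (I : Set N) : Ideal (binAlg K N) :=
  Ideal.span ((fun a => monomial K a) '' I)

/-- The Frobenius power `J^{[q]}` of an ideal in a commutative ring: the ideal generated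
by the `q`-th powers of the elements of `J`. -/
def frobPow {R : Type*} [CommRing R] (J : Ideal R) (q : ℕ) : Ideal R :=
  Ideal.span {x : R | ∃ y ∈ J, x = y ^ q}


end Binoid

/-!
In characteristic `p` the Frobenius is additive, so for `q = pᵉ` the ideals `K[𝔫]^[q]` and
`K[[q]𝔫]` of `K[N]` are both generated by the monomials `X^(q • a)`, `a ∈ 𝔫`. For every ideal
`J` of `N` the monomials `X^a` with `a ∉ J` form a `K`-basis of `K[N]/K[J]`, hence
`dim_K K[N]/K[𝔫]^[q] = #(N/[q]𝔫)`, and the sequence of the theorem is the subsequence `q = pᵉ`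
of the sequence defining `e_HK(𝔫, N)`.
-/

section

variable {K : Type*} [Field K]

theorem Finsupp.finrank_self_eq_natCard (ι : Type*) :
    Module.finrank K (ι →₀ K) = Nat.card ι := by
  rw [Module.finrank, rank_finsupp_self, Cardinal.toNat_lift, Nat.card]

theorem Finsupp.finrank_quotient_supported {α : Type*} (s : Set α) :
    Module.finrank K ((α →₀ K) ⧸ Finsupp.supported K K s) = sᶜ.ncard := by
  have hcompl : IsCompl (Finsupp.supported K K s) (Finsupp.supported K K sᶜ) :=
    ⟨Finsupp.disjoint_supported_supported isCompl_compl.disjoint,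
      Finsupp.codisjoint_supported_supported isCompl_compl.codisjoint⟩
  rw [(Submodule.quotientEquivOfIsCompl _ _ hcompl).finrank_eq,
    (Finsupp.supportedEquivFinsupp sᶜ).finrank_eq, Finsupp.finrank_self_eq_natCard,
    Nat.card_coe_set_eq]

end

namespace Binoid

theorem frobPow_span {R : Type*} [CommRing R] (p : ℕ) [ExpChar R p] (e : ℕ) (S : Set R) :
    frobPow (Ideal.span S) (p ^ e) = Ideal.span ((· ^ p ^ e) '' S) := by
  refine le_antisymm (Ideal.span_le.2 ?_) (Ideal.span_le.2 ?_)
  · rintro _ ⟨y, hy, rfl⟩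
    induction hy using Submodule.span_induction with
    | mem x hx => exact Ideal.subset_span ⟨x, hx, rfl⟩
    | zero => rw [zero_pow (pow_ne_zero e (expChar_pos R p).ne')]; exact zero_mem _
    | add x y _ _ hx hy => rw [add_pow_expChar_pow]; exact add_mem hx hy
    | smul a x _ hx => rw [smul_eq_mul, mul_pow]; exact Ideal.mul_mem_left _ _ hx
  · rintro _ ⟨s, hs, rfl⟩
    exact Ideal.subset_span ⟨s, Ideal.subset_span hs, rfl⟩

section Ideals

variable {N : Type*} [Binoid N]

theorem isIdeal_span (S : Set N) : IsIdeal (span S) := by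
  refine ⟨Set.mem_insert _ _, ?_⟩
  rintro a (rfl | ⟨m, s, hs, rfl⟩) n
  · exact Or.inl (add_infty n)
  · exact Or.inr ⟨n + m, s, hs, (add_assoc n m s).symm⟩

theorem isIdeal_frob (q : ℕ) (I : Set N) : IsIdeal (frob q I) :=
  isIdeal_span _

theorem IsPrimaryIdeal.zero_ne_infty {I : Set N} (hI : IsPrimaryIdeal I) :
    (0 : N) ≠ infty := by
  intro h
  have hrad : (infty : N) ∈ rad I := ⟨1, one_pos, by simpa using hI.1.1⟩
  rw [hI.2] at hrad
  exact hrad ⟨0, by rw [add_zero, h]⟩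

end Ideals

section Algebra

open AddMonoidAlgebra

variable {K : Type*} [Field K] {N : Type*} [Binoid N]

variable (K N) in
noncomputable def toBinAlg : AddMonoidAlgebra K N →ₐ[K] binAlg K N := Ideal.Quotient.mkₐ K _

theorem toBinAlg_surjective : Function.Surjective (toBinAlg K N) :=
  Ideal.Quotient.mkₐ_surjective K _

theorem ker_toBinAlg : RingHom.ker (toBinAlg K N) = Ideal.span {single (infty : N) (1 : K)} :=
  Ideal.Quotient.mkₐ_ker K _

theorem toBinAlg_of' (a : N) : toBinAlg K N (of' K N a) = monomial K a := rfl

theorem mem_ideal_span_of'_image_iff {J : Set N} (hJ : IsIdeal J) {f : AddMonoidAlgebra K N} :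
    f ∈ Ideal.span (of' K N '' J) ↔ f.coeff ∈ Finsupp.supported K K J := by
  rw [mem_ideal_span_of'_image, Finsupp.mem_supported]
  refine ⟨fun h m hm => ?_, fun h m hm => ⟨m, h hm, 0, (zero_add m).symm⟩⟩
  obtain ⟨m', hm', d, rfl⟩ := h m hm
  exact hJ.2 m' hm' d

theorem comap_toBinAlg_idealK {J : Set N} (hJ : IsIdeal J) :
    (idealK K J).comap (toBinAlg K N) = Ideal.span (of' K N '' J) := by
  have hker : RingHom.ker (toBinAlg K N) ≤ Ideal.span (of' K N '' J) :=
    ker_toBinAlg.trans_le (Ideal.span_mono (Set.singleton_subset_iff.2 ⟨infty, hJ.1, rfl⟩))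
  have hmap : idealK K J = (Ideal.span (of' K N '' J)).map (toBinAlg K N) := by
    rw [Ideal.map_span, Set.image_image]
    rfl
  rw [hmap, Ideal.comap_map_of_surjective (toBinAlg K N) toBinAlg_surjective,
    ← RingHom.ker_eq_comap_bot, sup_eq_left.2 hker]

theorem nontrivial_binAlg (h : (0 : N) ≠ infty) : Nontrivial (binAlg K N) := by
  refine ⟨⟨1, 0, fun h1 => ?_⟩⟩
  have hker : (1 : AddMonoidAlgebra K N) ∈ RingHom.ker (toBinAlg K N) := by
    rw [RingHom.mem_ker, map_one]
    exact h1
  have hinfty : IsIdeal ({infty} : Set N) := ⟨rfl, fun a ha n => by rw [ha, add_infty]; rfl⟩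
  rw [ker_toBinAlg, ← of'_apply, ← Set.image_singleton, mem_ideal_span_of'_image_iff hinfty,
    one_def, coeff_single, Finsupp.mem_supported, Finsupp.support_single _ one_ne_zero] at hker
  exact h (by simpa using hker)

theorem finrank_quotient_idealK {J : Set N} (hJ : IsIdeal J) :
    Module.finrank K (binAlg K N ⧸ idealK K J) = Jᶜ.ncard := by
  let ψ : (N →₀ K) →ₗ[K] binAlg K N ⧸ idealK K J :=
    ((Ideal.Quotient.mkₐ K (idealK K J)).comp (toBinAlg K N)).toLinearMap ∘ₗ
      (coeffLinearEquiv K).symm.toLinearMap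
  have hsurj : Function.Surjective ψ := (Ideal.Quotient.mkₐ_surjective K _).comp <|
    toBinAlg_surjective.comp (coeffLinearEquiv K).symm.surjective
  have hker : LinearMap.ker ψ = Finsupp.supported K K J := by
    ext f
    change Ideal.Quotient.mk _ (toBinAlg K N (ofCoeff f)) = 0 ↔ _
    rw [Ideal.Quotient.eq_zero_iff_mem, ← Ideal.mem_comap, comap_toBinAlg_idealK hJ,
      mem_ideal_span_of'_image_iff hJ, coeff_ofCoeff]
  rw [← (ψ.quotKerEquivOfSurjective hsurj).finrank_eq, hker, Finsupp.finrank_quotient_supported]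

theorem monomial_infty : (monomial K (infty : N) : binAlg K N) = 0 :=
  Ideal.Quotient.eq_zero_iff_mem.2 (Ideal.subset_span rfl)

theorem monomial_add (a b : N) :
    (monomial K (a + b) : binAlg K N) = monomial K a * monomial K b := by
  rw [← toBinAlg_of', ← toBinAlg_of', ← toBinAlg_of', ← map_mul, of'_apply, of'_apply,
    of'_apply, single_mul_single, one_mul]

theorem monomial_nsmul (n : ℕ) (a : N) :
    (monomial K (n • a) : binAlg K N) = monomial K a ^ n := by
  rw [← toBinAlg_of', ← toBinAlg_of', ← map_pow, of'_apply, of'_apply, single_pow, one_pow]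

theorem idealK_span (S : Set N) :
    idealK K (span S) = Ideal.span ((monomial K ·) '' S) := by
  refine le_antisymm (Ideal.span_le.2 ?_) (Ideal.span_mono ?_)
  · rintro _ ⟨x, rfl | ⟨n, s, hs, rfl⟩, rfl⟩ <;> dsimp only
    · rw [monomial_infty]
      exact zero_mem _
    · rw [monomial_add]
      exact Ideal.mul_mem_left _ _ (Ideal.subset_span ⟨s, hs, rfl⟩)
  · rintro _ ⟨s, hs, rfl⟩
    exact ⟨s, Or.inr ⟨0, s, hs, (zero_add s).symm⟩, rfl⟩

theorem frobPow_idealK (p : ℕ) [ExpChar (binAlg K N) p] (e : ℕ) (I : Set N) :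
    frobPow (idealK K I) (p ^ e) = idealK K (frob (p ^ e) I) := by
  have hfrob : {x | ∃ a ∈ I, x = p ^ e • a} = (p ^ e • ·) '' I := by
    ext
    simp [eq_comm]
  rw [idealK, frobPow_span, frob, idealK_span, hfrob, Set.image_image, Set.image_image]
  simp_rw [monomial_nsmul]

theorem finrank_quotient_frobPow_idealK (p : ℕ) [ExpChar (binAlg K N) p] (e : ℕ) (I : Set N) :
    Module.finrank K (binAlg K N ⧸ frobPow (idealK K I) (p ^ e)) = hkOn I (p ^ e) := by
  rw [frobPow_idealK, finrank_quotient_idealK (isIdeal_frob _ _)]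
  rfl

end Algebra

end Binoid

open Binoid

theorem hk_multiplicity_binoid_algebra_general
    {K : Type*} [Field K] {N : Type*} [Binoid N]
    (p : ℕ) (hp : p.Prime) (hchar : CharP K p)
    (𝔫 : Set N) (h𝔫 : IsPrimaryIdeal 𝔫)
    (L : ℝ) (hL : IsHKMultOn 𝔫 L) :
    Filter.Tendsto
      (fun e : ℕ =>
        (Module.finrank K (binAlg K N ⧸ frobPow (idealK K 𝔫) (p ^ e)) : ℝ)
          / ((p : ℝ) ^ e) ^ dim N)
      Filter.atTop (nhds L) := by
  have : Nontrivial (binAlg K N) := nontrivial_binAlg h𝔫.zero_ne_infty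
  have : Fact p.Prime := ⟨hp⟩
  have : CharP (binAlg K N) p := charP_of_injective_algebraMap (algebraMap K _).injective p
  refine (hL.comp (tendsto_pow_atTop_atTop_of_one_lt hp.one_lt)).congr fun e => ?_
  simp [finrank_quotient_frobPow_idealK]

/-- **Statement 4.** Let `K` be a field of characteristic `p > 0` and `N` a finitely
generated, semipositive binoid with `dim N = dim K[N]`. Suppose
`e_HK(𝔫,N) = lim_{q→∞} #(N/[q]𝔫)/q^(dim N)` exists, where `𝔫` is an `N₊`-primary ideal.
Then `lim_{e→∞} dim_K(K[N]/K[𝔫]^{[pᵉ]})/pᵉ^(dim K[N])` exists and equals `e_HK(𝔫,N)`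
(in particular it is independent of the positive characteristic of `K`). -/
theorem hk_multiplicity_binoid_algebra
    {K : Type*} [Field K] {N : Type*} [Binoid N]
    (p : ℕ) (hp : p.Prime) (hchar : CharP K p)
    (hfg : FG N) (hsp : Semipositive N)
    (hdim : (dim N : WithBot (WithTop ℕ)) = ringKrullDim (binAlg K N))
    (𝔫 : Set N) (h𝔫 : IsPrimaryIdeal 𝔫)
    (L : ℝ) (hL : IsHKMultOn 𝔫 L) :
    Filter.Tendsto
      (fun e : ℕ =>
        (Module.finrank K (binAlg K N ⧸ frobPow (idealK K 𝔫) (p ^ e)) : ℝ)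
          / ((p : ℝ) ^ e) ^ dim N)
      Filter.atTop (nhds L) :=
  hk_multiplicity_binoid_algebra_general p hp hchar 𝔫 h𝔫 L hL
end

section
/- Let M and N be finitely generated semipositive binoids such that e_HK(M) and e_HK(N) exist. Then e_HK(M∧N) exists and e_HK(M∧N) = e_HK(M)·e_HK(N). -/
namespace Binoid

variable {N : Type*} [Binoid N]

/-- The additive congruence on `N` contracting the subset `I` to a point.
(When `I` is an ideal, the relation below is already a congruence.) -/
def quotCon (I : Set N) : AddCon N :=
  addConGen (fun a b => a = b ∨ (a ∈ I ∧ b ∈ I))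

/-- The residue class binoid `N/I`, obtained by contracting the ideal `I` to `∞`. -/
def BQuot (I : Set N) : Type _ := (quotCon I).Quotient

instance (I : Set N) : AddCommMonoid (BQuot I) :=
  inferInstanceAs (AddCommMonoid (quotCon I).Quotient)

/-- The canonical projection `N → N/I`. -/
def BQuot.mk (I : Set N) (a : N) : BQuot I := (a : (quotCon I).Quotient)

instance (I : Set N) : Binoid (BQuot I) :=
  { (inferInstance : AddCommMonoid (BQuot I)) with
    infty := BQuot.mk I infty
    add_infty := fun x => AddCon.induction_on x fun a => by
      show BQuot.mk I a + BQuot.mk I infty = BQuot.mk I infty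
      show ((a + infty : N) : (quotCon I).Quotient) = ((infty : N) : (quotCon I).Quotient)
      rw [add_infty] }

/-- The product of two binoids (with componentwise addition). -/
instance {M P : Type*} [Binoid M] [Binoid P] : Binoid (M × P) :=
  { (inferInstance : AddCommMonoid (M × P)) with
    infty := ((infty : M), (infty : P))
    add_infty := fun x => by
      show (x.1 + infty, x.2 + infty) = ((infty : M), (infty : P))
      rw [add_infty, add_infty] }

/-- The ideal of `M × P` consisting of pairs one of whose coordinates is `∞`. -/
def smashIdeal (M P : Type*) [Binoid M] [Binoid P] : Set (M × P) :=
  {x : M × P | x.1 = infty ∨ x.2 = infty}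

/-- The smash product `M ∧ P` of two binoids. -/
def Smash (M P : Type*) [Binoid M] [Binoid P] : Type _ :=
  BQuot (smashIdeal M P)

instance {M P : Type*} [Binoid M] [Binoid P] : AddCommMonoid (Smash M P) :=
  inferInstanceAs (AddCommMonoid (BQuot (smashIdeal M P)))

instance {M P : Type*} [Binoid M] [Binoid P] : Binoid (Smash M P) :=
  inferInstanceAs (Binoid (BQuot (smashIdeal M P)))

/-- The class of `(m, p)` in the smash product `M ∧ P`. -/
def Smash.mk {M P : Type*} [Binoid M] [Binoid P] (m : M) (p : P) : Smash M P :=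
  BQuot.mk (smashIdeal M P) (m, p)

end Binoid

namespace LTSeries

variable {α β : Type*} [Preorder α] [Preorder β]

theorem exists_length_le_add_of_prod (p : LTSeries (α × β)) :
    ∃ (s : LTSeries α) (t : LTSeries β),
      s.last ≤ p.last.1 ∧ t.last ≤ p.last.2 ∧ p.length ≤ s.length + t.length := by
  induction p using RelSeries.inductionOn' with
  | singleton x =>
    exact ⟨RelSeries.singleton _ x.1, RelSeries.singleton _ x.2, le_rfl, le_rfl, by simp⟩
  | snoc p x hx ih =>
    obtain ⟨s, t, hs, ht, hlen⟩ := ih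
    simp only [RelSeries.last_snoc, RelSeries.snoc_length]
    rcases Prod.lt_iff.1 hx with ⟨h1, h2⟩ | ⟨h1, h2⟩
    · exact ⟨s.snoc x.1 (hs.trans_lt h1), t, (s.last_snoc _ _).le, ht.trans h2,
        by rw [RelSeries.snoc_length]; omega⟩
    · exact ⟨s, t.snoc x.2 (ht.trans_lt h2), hs.trans h1, (t.last_snoc _ _).le,
        by rw [RelSeries.snoc_length]; omega⟩

/-- The series `(s₀, t₀) < ⋯ < (sₘ, t₀) < (sₘ, t₁) < ⋯ < (sₘ, tₙ)`. -/
def prod (s : LTSeries α) (t : LTSeries β) : LTSeries (α × β) :=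
  (s.map (·, t.head) fun _ _ h => Prod.mk_lt_mk_iff_left.2 h).smash
    (t.map (s.last, ·) fun _ _ h => Prod.mk_lt_mk_iff_right.2 h) rfl

@[simp]
theorem length_prod (s : LTSeries α) (t : LTSeries β) :
    (s.prod t).length = s.length + t.length := rfl

end LTSeries

namespace Binoid

variable {N : Type*} [Binoid N]

theorem mem_frob_iff {q : ℕ} {I : Set N} {x : N} :
    x ∈ frob q I ↔ x = infty ∨ ∃ n : N, ∃ a ∈ I, x = n + q • a := by
  constructor
  · rintro (h | ⟨n, _, ⟨a, ha, rfl⟩, rfl⟩)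
    exacts [Or.inl h, Or.inr ⟨n, a, ha, rfl⟩]
  · rintro (rfl | ⟨n, a, ha, rfl⟩)
    exacts [Set.mem_insert _ _, Or.inr ⟨n, q • a, ⟨a, ha, rfl⟩, rfl⟩]

theorem infty_mem_frob (q : ℕ) (I : Set N) : (infty : N) ∈ frob q I :=
  mem_frob_iff.2 (Or.inl rfl)

theorem hkOn_eq_zero_of_zero_eq_infty (h0 : (0 : N) = infty) (I : Set N) (q : ℕ) :
    hkOn I q = 0 := by
  have hall (x : N) : x = infty := by rw [← add_zero x, h0, add_infty]
  rw [hkOn, Set.compl_empty_iff.2 (Set.eq_univ_of_forall fun x => hall x ▸ infty_mem_frob q I),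
    Set.ncard_empty]

theorem isHKMult_iff_of_zero_eq_infty (h0 : (0 : N) = infty) {L : ℝ} :
    IsHKMult N L ↔ L = 0 := by
  simp only [IsHKMult, IsHKMultOn, hkOn_eq_zero_of_zero_eq_infty h0, Nat.cast_zero, zero_div]
  exact tendsto_const_nhds_iff.trans eq_comm

def IsIdeal.addCon {I : Set N} (hI : IsIdeal I) : AddCon N where
  r a b := a = b ∨ (a ∈ I ∧ b ∈ I)
  iseqv :=
    { refl := fun _ => Or.inl rfl
      symm := fun h => h.imp Eq.symm And.symm
      trans := by
        rintro a b c (rfl | ⟨ha, hb⟩) (rfl | ⟨hb', hc⟩)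
        exacts [Or.inl rfl, Or.inr ⟨hb', hc⟩, Or.inr ⟨ha, hb⟩, Or.inr ⟨ha, hc⟩] }
  add' := by
    have hI' (a b : N) (ha : a ∈ I) : a + b ∈ I := add_comm b a ▸ hI.2 a ha b
    rintro w x y z (rfl | ⟨hw, hx⟩) (rfl | ⟨hy, hz⟩)
    · exact Or.inl rfl
    · exact Or.inr ⟨hI.2 y hy w, hI.2 z hz w⟩
    · exact Or.inr ⟨hI' w y hw, hI' x y hx⟩
    · exact Or.inr ⟨hI' w y hw, hI' x z hx⟩

theorem BQuot.mk_eq_mk_iff {I : Set N} (hI : IsIdeal I) {a b : N} :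
    BQuot.mk I a = BQuot.mk I b ↔ a = b ∨ (a ∈ I ∧ b ∈ I) := by
  show (a : (quotCon I).Quotient) = b ↔ _
  rw [AddCon.eq, show quotCon I = hI.addCon from AddCon.addConGen_of_addCon hI.addCon]
  rfl

theorem IsPrime.zero_notMem {P : Set N} (hP : IsPrime P) : (0 : N) ∉ P := fun h0 =>
  hP.2.1 (Set.eq_univ_of_forall fun x => add_zero x ▸ hP.1.2 0 h0 x)

theorem IsPrime.add_mem_iff {P : Set N} (hP : IsPrime P) {a b : N} :
    a + b ∈ P ↔ a ∈ P ∨ b ∈ P := by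
  refine ⟨fun h => by_contra fun hab => ?_, ?_⟩
  · rw [not_or] at hab
    exact hP.2.2 a b hab.1 hab.2 h
  · rintro (ha | hb)
    · exact add_comm b a ▸ hP.1.2 a ha b
    · exact hP.1.2 b hb a

theorem isPrime_plusSet (h0 : (0 : N) ≠ infty) : IsPrime (plusSet N) := by
  refine ⟨⟨fun ⟨b, hb⟩ => h0 (by rw [← hb, infty_add]), ?_⟩, ?_, ?_⟩
  · rintro a ha n ⟨b, hb⟩
    exact ha ⟨n + b, by rw [← hb]; abel⟩
  · exact fun h => (h ▸ Set.mem_univ (0 : N)) ⟨0, add_zero 0⟩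
  · intro a b ha hb hab
    obtain ⟨a', ha'⟩ := Set.notMem_compl_iff.1 ha
    obtain ⟨b', hb'⟩ := Set.notMem_compl_iff.1 hb
    exact hab ⟨a' + b', by rw [add_add_add_comm, ha', hb', add_zero]⟩

theorem IsPrime.preimage {M : Type*} [Binoid M] {P : Set N} (hP : IsPrime P) (f : M →+ N)
    (hf : f infty = infty) : IsPrime (f ⁻¹' P) := by
  refine ⟨⟨by simpa [hf] using hP.1.1, fun a ha n => ?_⟩, fun h => ?_, fun a b ha hb => ?_⟩
  · simpa using hP.1.2 _ ha (f n)
  · have h0 : (0 : M) ∈ f ⁻¹' P := h ▸ Set.mem_univ 0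
    exact hP.zero_notMem (by simpa using h0)
  · simpa [hP.add_mem_iff] using And.intro ha hb

theorem IsPrime.subset_of_forall_mem {s : Set N} (hs : AddSubmonoid.closure s = ⊤)
    {P Q : Set N} (hP : IsPrime P) (hQ : IsPrime Q) (h : ∀ g ∈ s, g ∈ Q → g ∈ P) : Q ⊆ P := by
  intro a
  have ha : a ∈ AddSubmonoid.closure s := hs ▸ AddSubmonoid.mem_top a
  contrapose
  induction ha using AddSubmonoid.closure_induction with
  | mem g hg => exact mt (h g hg)
  | zero => exact fun _ => hQ.zero_notMem
  | add x y _ _ hx hy =>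
    rw [hP.add_mem_iff, hQ.add_mem_iff, not_or, not_or]
    exact fun h => ⟨hx h.1, hy h.2⟩

abbrev Spec (N : Type*) [Binoid N] := {P : Set N // IsPrime P}

theorem mem_dimSet_iff {n : ℕ} : n ∈ dimSet N ↔ ∃ p : LTSeries (Spec N), p.length = n := by
  constructor
  · rintro ⟨c, hc, hmono⟩
    exact ⟨LTSeries.mk n (fun i => ⟨c i, hc i⟩) fun i j h => hmono h, rfl⟩
  · rintro ⟨p, rfl⟩
    exact ⟨fun i => (p i).1, fun i => (p i).2, fun i j h => p.strictMono h⟩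

theorem bddAbove_dimSet (hfg : FG N) : BddAbove (dimSet N) := by
  classical
  obtain ⟨s, hs⟩ := hfg
  let traceOnGenerators : Spec N → Set s := fun P => Subtype.val ⁻¹' P.1
  have hmono : StrictMono traceOnGenerators := fun P Q hPQ =>
    lt_of_le_of_ne (Set.preimage_mono hPQ.le) fun h => hPQ.not_ge <|
      IsPrime.subset_of_forall_mem hs P.2 Q.2 fun g hg hgQ =>
        show (⟨g, hg⟩ : s) ∈ traceOnGenerators P from h ▸ hgQ
  refine ⟨Fintype.card (Set s), fun n hn => ?_⟩
  obtain ⟨p, rfl⟩ := mem_dimSet_iff.1 hn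
  exact (p.map traceOnGenerators hmono).length_lt_card.le

theorem length_le_dim (hfg : FG N) (p : LTSeries (Spec N)) : p.length ≤ dim N :=
  le_csSup (bddAbove_dimSet hfg) (mem_dimSet_iff.2 ⟨p, rfl⟩)

theorem exists_length_eq_dim (hfg : FG N) (h0 : (0 : N) ≠ infty) :
    ∃ p : LTSeries (Spec N), p.length = dim N :=
  mem_dimSet_iff.1 <| Nat.sSup_mem
    ⟨0, mem_dimSet_iff.2 ⟨RelSeries.singleton _ ⟨plusSet N, isPrime_plusSet h0⟩, rfl⟩⟩
    (bddAbove_dimSet hfg)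

section SmashProduct

variable {M P : Type*} [Binoid M] [Binoid P]

theorem smashIdeal_isIdeal : IsIdeal (smashIdeal M P) := by
  refine ⟨Or.inl rfl, ?_⟩
  rintro ⟨a, b⟩ (h | h) ⟨m, p⟩
  · exact Or.inl (show m + a = infty by rw [show a = infty from h, add_infty])
  · exact Or.inr (show p + b = infty by rw [show b = infty from h, add_infty])

namespace Smash

theorem mk_eq_mk_iff {m m' : M} {p p' : P} :
    mk m p = mk m' p' ↔
      (m = m' ∧ p = p') ∨ ((m = infty ∨ p = infty) ∧ (m' = infty ∨ p' = infty)) :=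
  (BQuot.mk_eq_mk_iff smashIdeal_isIdeal).trans <| by rw [Prod.mk.injEq]; rfl

theorem exists_eq_mk (z : Smash M P) : ∃ m p, z = mk m p := by
  obtain ⟨⟨m, p⟩, rfl⟩ := AddCon.mk'_surjective z
  exact ⟨m, p, rfl⟩

theorem mk_add_mk (m m' : M) (p p' : P) : mk m p + mk m' p' = mk (m + m') (p + p') := rfl

theorem mk_nsmul (q : ℕ) (m : M) (p : P) : q • mk m p = mk (q • m) (q • p) :=
  ((quotCon (smashIdeal M P)).mk'.map_nsmul q (m, p)).symm

theorem mk_zero_zero : mk (0 : M) (0 : P) = 0 := rfl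

theorem mk_eq_infty_iff {m : M} {p : P} : mk m p = infty ↔ m = infty ∨ p = infty := by
  rw [show (infty : Smash M P) = mk infty infty from rfl, mk_eq_mk_iff]
  tauto

theorem mk_mem_unitSet_iff (h0M : (0 : M) ≠ infty) (h0P : (0 : P) ≠ infty) {m : M} {p : P} :
    mk m p ∈ unitSet (Smash M P) ↔ m ∈ unitSet M ∧ p ∈ unitSet P := by
  constructor
  · rintro ⟨z, hz⟩
    obtain ⟨m', p', rfl⟩ := exists_eq_mk z
    rw [mk_add_mk, ← mk_zero_zero, mk_eq_mk_iff] at hz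
    rcases hz with ⟨hm, hp⟩ | ⟨-, h0 | h0⟩
    exacts [⟨⟨m', hm⟩, ⟨p', hp⟩⟩, absurd h0 h0M, absurd h0 h0P]
  · rintro ⟨⟨m', hm⟩, ⟨p', hp⟩⟩
    exact ⟨mk m' p', by rw [mk_add_mk, hm, hp, mk_zero_zero]⟩

theorem mk_mem_plusSet_iff (h0M : (0 : M) ≠ infty) (h0P : (0 : P) ≠ infty) {m : M} {p : P} :
    mk m p ∈ plusSet (Smash M P) ↔ m ∈ plusSet M ∨ p ∈ plusSet P := by
  simp only [plusSet, Set.mem_compl_iff, mk_mem_unitSet_iff h0M h0P, not_and_or]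

theorem mk_mem_frob_iff (h0M : (0 : M) ≠ infty) (h0P : (0 : P) ≠ infty)
    {q : ℕ} {m : M} {p : P} :
    mk m p ∈ frob q (plusSet (Smash M P)) ↔
      m ∈ frob q (plusSet M) ∨ p ∈ frob q (plusSet P) := by
  simp only [mem_frob_iff, mk_eq_infty_iff]
  constructor
  · rintro (h | ⟨z, a, ha, hz⟩)
    · exact h.imp Or.inl Or.inl
    obtain ⟨z₁, z₂, rfl⟩ := exists_eq_mk z
    obtain ⟨a₁, a₂, rfl⟩ := exists_eq_mk a
    rw [mk_nsmul, mk_add_mk, mk_eq_mk_iff] at hz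
    rcases hz with ⟨rfl, rfl⟩ | ⟨h, -⟩
    · exact ((mk_mem_plusSet_iff h0M h0P).1 ha).imp
        (fun ha => Or.inr ⟨z₁, a₁, ha, rfl⟩) (fun ha => Or.inr ⟨z₂, a₂, ha, rfl⟩)
    · exact h.imp Or.inl Or.inl
  · rintro ((h | ⟨z, a, ha, rfl⟩) | (h | ⟨z, a, ha, rfl⟩))
    · exact Or.inl (Or.inl h)
    · refine Or.inr ⟨mk z p, mk a 0, (mk_mem_plusSet_iff h0M h0P).2 (Or.inl ha), ?_⟩
      rw [mk_nsmul, mk_add_mk, smul_zero, add_zero]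
    · exact Or.inl (Or.inr h)
    · refine Or.inr ⟨mk m z, mk 0 a, (mk_mem_plusSet_iff h0M h0P).2 (Or.inr ha), ?_⟩
      rw [mk_nsmul, mk_add_mk, smul_zero, add_zero]

def inl : M →+ Smash M P where
  toFun m := mk m 0
  map_zero' := rfl
  map_add' m m' := by rw [mk_add_mk, add_zero]

def inr : P →+ Smash M P where
  toFun p := mk 0 p
  map_zero' := rfl
  map_add' p p' := by rw [mk_add_mk, add_zero]

theorem inl_add_inr (m : M) (p : P) : inl m + inr p = mk m p := by
  show mk m 0 + mk 0 p = mk m p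
  rw [mk_add_mk, add_zero, zero_add]

theorem inl_infty : inl (infty : M) = (infty : Smash M P) := mk_eq_infty_iff.2 (Or.inl rfl)

theorem inr_infty : inr (infty : P) = (infty : Smash M P) := mk_eq_infty_iff.2 (Or.inr rfl)

/-- The ideal `I ∧ P ∪ M ∧ J` of `M ∧ P`. -/
def prodIdeal (I : Set M) (J : Set P) : Set (Smash M P) :=
  {z | ∃ m p, z = mk m p ∧ (m ∈ I ∨ p ∈ J)}

theorem mk_mem_prodIdeal_iff {I : Set M} {J : Set P} (hI : infty ∈ I) (hJ : infty ∈ J)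
    {m : M} {p : P} : mk m p ∈ prodIdeal I J ↔ m ∈ I ∨ p ∈ J := by
  refine ⟨?_, fun h => ⟨m, p, rfl, h⟩⟩
  rintro ⟨m', p', heq, h⟩
  rcases mk_eq_mk_iff.1 heq with ⟨rfl, rfl⟩ | ⟨hinf | hinf, -⟩
  · exact h
  · exact Or.inl (hinf ▸ hI)
  · exact Or.inr (hinf ▸ hJ)

theorem prodIdeal_mono {I I' : Set M} {J J' : Set P} (hI : I ⊆ I') (hJ : J ⊆ J') :
    prodIdeal I J ⊆ prodIdeal I' J' := by
  rintro z ⟨m, p, rfl, h⟩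
  exact ⟨m, p, rfl, h.imp (@hI m) (@hJ p)⟩

theorem isPrime_prodIdeal {I : Set M} {J : Set P} (hI : IsPrime I) (hJ : IsPrime J) :
    IsPrime (prodIdeal I J) := by
  have hmem {m : M} {p : P} := mk_mem_prodIdeal_iff hI.1.1 hJ.1.1 (m := m) (p := p)
  refine ⟨⟨hmem.2 (Or.inl hI.1.1), fun a ha z => ?_⟩, fun h => ?_, fun a b ha hb => ?_⟩
  · obtain ⟨m, p, rfl⟩ := exists_eq_mk a
    obtain ⟨m', p', rfl⟩ := exists_eq_mk z
    rw [hmem] at ha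
    rw [mk_add_mk, hmem, hI.add_mem_iff, hJ.add_mem_iff]
    tauto
  · have h0 : mk (0 : M) (0 : P) ∈ prodIdeal I J := h ▸ Set.mem_univ _
    exact (hmem.1 h0).elim hI.zero_notMem hJ.zero_notMem
  · obtain ⟨m, p, rfl⟩ := exists_eq_mk a
    obtain ⟨m', p', rfl⟩ := exists_eq_mk b
    rw [hmem] at ha hb
    rw [mk_add_mk, hmem, hI.add_mem_iff, hJ.add_mem_iff]
    tauto

def specOrderIso : Spec (Smash M P) ≃o Spec M × Spec P :=
  Equiv.toOrderIso
    { toFun Q := (⟨inl ⁻¹' Q.1, Q.2.preimage inl inl_infty⟩,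
        ⟨inr ⁻¹' Q.1, Q.2.preimage inr inr_infty⟩)
      invFun x := ⟨prodIdeal x.1.1 x.2.1, isPrime_prodIdeal x.1.2 x.2.2⟩
      left_inv Q := by
        refine Subtype.ext (Set.ext fun z => ?_)
        obtain ⟨m, p, rfl⟩ := exists_eq_mk z
        rw [mk_mem_prodIdeal_iff (Q.2.preimage inl inl_infty).1.1
          (Q.2.preimage inr inr_infty).1.1, ← inl_add_inr, Q.2.add_mem_iff]
        rfl
      right_inv x := by
        refine Prod.ext (Subtype.ext (Set.ext fun m => ?_)) (Subtype.ext (Set.ext fun p => ?_))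
        · show mk m 0 ∈ prodIdeal _ _ ↔ _
          rw [mk_mem_prodIdeal_iff x.1.2.1.1 x.2.2.1.1]
          exact or_iff_left x.2.2.zero_notMem
        · show mk 0 p ∈ prodIdeal _ _ ↔ _
          rw [mk_mem_prodIdeal_iff x.1.2.1.1 x.2.2.1.1]
          exact or_iff_right x.1.2.zero_notMem }
    (fun _ _ h => ⟨Set.preimage_mono h, Set.preimage_mono h⟩)
    (fun _ _ h => prodIdeal_mono h.1 h.2)

end Smash

theorem hkOn_smash (h0M : (0 : M) ≠ infty) (h0P : (0 : P) ≠ infty) (q : ℕ) :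
    hkOn (plusSet (Smash M P)) q = hkOn (plusSet M) q * hkOn (plusSet P) q := by
  let f : M × P → Smash M P := fun x => Smash.mk x.1 x.2
  have himage : (frob q (plusSet (Smash M P)))ᶜ =
      f '' ((frob q (plusSet M))ᶜ ×ˢ (frob q (plusSet P))ᶜ) := by
    ext z
    obtain ⟨m, p, rfl⟩ := Smash.exists_eq_mk z
    refine ⟨fun hz => ⟨(m, p), ?_, rfl⟩, ?_⟩
    · simpa [Smash.mk_mem_frob_iff h0M h0P, not_or] using hz
    · rintro ⟨x, hx, hz⟩
      rw [← hz]
      simpa [f, Smash.mk_mem_frob_iff h0M h0P, not_or] using hx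
  have hinj : Set.InjOn f ((frob q (plusSet M))ᶜ ×ˢ (frob q (plusSet P))ᶜ) := by
    rintro ⟨m, p⟩ ⟨hm, hp⟩ ⟨m', p'⟩ - h
    rcases Smash.mk_eq_mk_iff.1 h with ⟨rfl, rfl⟩ | ⟨hinf | hinf, -⟩
    · rfl
    · exact absurd (hinf ▸ infty_mem_frob q _) hm
    · exact absurd (hinf ▸ infty_mem_frob q _) hp
  rw [hkOn, himage, hinj.ncard_image, Set.ncard_prod, hkOn, hkOn]

theorem length_le_dim_add_dim (hfgM : FG M) (hfgP : FG P) (p : LTSeries (Spec (Smash M P))) :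
    p.length ≤ dim M + dim P := by
  obtain ⟨s, t, -, -, hlen⟩ :=
    (p.map Smash.specOrderIso Smash.specOrderIso.strictMono).exists_length_le_add_of_prod
  exact hlen.trans (add_le_add (length_le_dim hfgM s) (length_le_dim hfgP t))

theorem dim_smash (hfgM : FG M) (hfgP : FG P) (h0M : (0 : M) ≠ infty) (h0P : (0 : P) ≠ infty) :
    dim (Smash M P) = dim M + dim P := by
  obtain ⟨s, hs⟩ := exists_length_eq_dim hfgM h0M
  obtain ⟨t, ht⟩ := exists_length_eq_dim hfgP h0P
  have hbdd : dim M + dim P ∈ upperBounds (dimSet (Smash M P)) := fun n hn => by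
    obtain ⟨p, rfl⟩ := mem_dimSet_iff.1 hn
    exact length_le_dim_add_dim hfgM hfgP p
  refine le_antisymm (csSup_le' hbdd) (le_csSup ⟨_, hbdd⟩ (mem_dimSet_iff.2
    ⟨(LTSeries.prod s t).map Smash.specOrderIso.symm Smash.specOrderIso.symm.strictMono, ?_⟩))
  rw [LTSeries.map_length, LTSeries.length_prod, hs, ht]

theorem isHKMult_smash (hfgM : FG M) (hfgP : FG P) (h0M : (0 : M) ≠ infty)
    (h0P : (0 : P) ≠ infty) {LM LP : ℝ} (hM : IsHKMult M LM) (hP : IsHKMult P LP) :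
    IsHKMult (Smash M P) (LM * LP) := by
  unfold IsHKMult IsHKMultOn at *
  rw [dim_smash hfgM hfgP h0M h0P]
  convert hM.mul hP using 2 with q
  rw [hkOn_smash h0M h0P, Nat.cast_mul, pow_add, mul_div_mul_comm]

end SmashProduct

end Binoid

open Binoid

theorem hk_multiplicity_smash_general
    {M N : Type*} [Binoid M] [Binoid N]
    (hfgM : FG M) (hfgN : FG N)
    (LM LN : ℝ) (hM : IsHKMult M LM) (hN : IsHKMult N LN) :
    IsHKMult (Smash M N) (LM * LN) := by
  by_cases h0 : (0 : M) = infty ∨ (0 : N) = infty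
  · rw [isHKMult_iff_of_zero_eq_infty (Smash.mk_eq_infty_iff.2 h0)]
    rcases h0 with h0 | h0
    · rw [(isHKMult_iff_of_zero_eq_infty h0).1 hM, zero_mul]
    · rw [(isHKMult_iff_of_zero_eq_infty h0).1 hN, mul_zero]
  · rw [not_or] at h0
    exact isHKMult_smash hfgM hfgN h0.1 h0.2 hM hN

/-- **Statement 6.** Let `M` and `N` be finitely generated semipositive binoids such that
`e_HK(M)` and `e_HK(N)` exist. Then `e_HK(M∧N)` exists and
`e_HK(M∧N) = e_HK(M)·e_HK(N)`. -/
theorem hk_multiplicity_smash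
    {M N : Type*} [Binoid M] [Binoid N]
    (hfgM : FG M) (hspM : Semipositive M) (hfgN : FG N) (hspN : Semipositive N)
    (LM LN : ℝ) (hM : IsHKMult M LM) (hN : IsHKMult N LN) :
    IsHKMult (Smash M N) (LM * LN) :=
  hk_multiplicity_smash_general hfgM hfgN LM LN hM hN
end

section
/- Let N be a finitely generated, semipositive binoid, I an ideal of N and J an N₊-primary ideal of N. Then all four sets below are finite and #(N/J) + #((I∩J)/(I+J)) = #(I/(I+J)) + #((N/I)/(J+(N/I))). -/
open Binoid

/-! Split along `I`: `N ∖ J = (I ∖ J) ⊔ (N ∖ (I ∪ J))` and, since `I + J ⊆ J`,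
`I ∖ (I + J) = (I ∖ J) ⊔ ((I ∩ J) ∖ (I + J))`, while `N/I` minus the extension of `J` is a
copy of `N ∖ (I ∪ J)`. For finiteness, write `x ∉ J` as a sum of multiples of generators: no
summand lies in `J`, and a generator has only finitely many multiples outside `J` (a unit's
multiples are units, a non-unit has a multiple in `J`). By Dickson's lemma `I` is generated by
a finite set `B`, so `I ∖ (I + J) ⊆ (N ∖ J) + B`. -/

namespace Binoid

variable {N : Type*} [Binoid N]

theorem IsIdeal.add_mem_right {I : Set N} (hI : IsIdeal I) {a : N} (ha : a ∈ I) (n : N) :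
    a + n ∈ I :=
  add_comm n a ▸ hI.2 a ha n

theorem IsIdeal.sum_mem {ι : Type*} {I : Set N} (hI : IsIdeal I) {t : Finset ι} {f : ι → N}
    {i : ι} (hi : i ∈ t) (hfi : f i ∈ I) : ∑ j ∈ t, f j ∈ I := by
  classical
  exact Finset.add_sum_erase t f hi ▸ hI.add_mem_right hfi _

theorem idealSum_subset_right {I J : Set N} (hJ : IsIdeal J) : idealSum I J ⊆ J := by
  rintro _ ⟨a, -, b, hb, rfl⟩
  exact hJ.2 b hb a

theorem nsmul_mem_unitSet {g : N} (hg : g ∈ unitSet N) (k : ℕ) : k • g ∈ unitSet N := by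
  obtain ⟨h, hgh⟩ := hg
  exact ⟨k • h, by rw [← nsmul_add, hgh, nsmul_zero]⟩

theorem finite_range_nsmul_diff (hsp : Semipositive N) {J : Set N} (hJ : IsIdeal J)
    (hrad : plusSet N ⊆ rad J) (g : N) : (Set.range (fun k : ℕ => k • g) \ J).Finite := by
  by_cases hg : g ∈ unitSet N
  · refine hsp.subset ?_
    rintro _ ⟨⟨k, rfl⟩, -⟩
    exact nsmul_mem_unitSet hg k
  · obtain ⟨m, -, hm⟩ := hrad hg
    refine ((Set.finite_Iio m).image (· • g)).subset ?_
    rintro _ ⟨⟨k, rfl⟩, hk⟩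
    refine ⟨k, Set.mem_Iio.2 (lt_of_not_ge fun hmk => hk ?_), rfl⟩
    change k • g ∈ J
    rw [← Nat.sub_add_cancel hmk, add_nsmul]
    exact hJ.2 _ hm _

theorem finite_compl_of_plusSet_subset_rad (hfg : FG N) (hsp : Semipositive N) {J : Set N}
    (hJ : IsIdeal J) (hrad : plusSet N ⊆ rad J) : (Jᶜ).Finite := by
  obtain ⟨s, hs⟩ := hfg
  have hpi := Set.Finite.pi fun i : s => finite_range_nsmul_diff hsp hJ hrad (i : N)
  refine (hpi.image fun f => ∑ i, f i).subset fun x hx => ?_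
  obtain ⟨a, rfl⟩ := AddSubmonoid.mem_closure_finset'.1 (hs ▸ AddSubmonoid.mem_top x)
  exact ⟨fun i => a i • (i : N),
    fun i _ => ⟨⟨a i, rfl⟩, fun hi => hx (hJ.sum_mem (Finset.mem_univ i) hi)⟩, rfl⟩

theorem IsIdeal.exists_finite_generators (hfg : FG N) {I : Set N} (hI : IsIdeal I) :
    ∃ B ⊆ I, B.Finite ∧ ∀ x ∈ I, ∃ n, ∃ b ∈ B, x = n + b := by
  obtain ⟨s, hs⟩ := hfg
  let φ := Fintype.linearCombination ℕ ((↑) : s → N)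
  let P : AddSemigroupIdeal (s → ℕ) :=
    { carrier := φ ⁻¹' I
      vadd_mem' := fun c a ha => by
        change φ (c + a) ∈ I
        rw [map_add]
        exact hI.2 _ ha _ }
  obtain ⟨T, hT⟩ := AddSemigroupIdeal.fg_iff.1 (AddSemigroupIdeal.fg_of_wellQuasiOrderedLE P)
  refine ⟨φ '' T, ?_, T.finite_toSet.image φ, fun x hx => ?_⟩
  · rintro _ ⟨t, ht, rfl⟩
    exact (hT ▸ AddSemigroupIdeal.subset_closure ht : t ∈ P)
  · obtain ⟨a, rfl⟩ := AddSubmonoid.mem_closure_finset'.1 (hs ▸ AddSubmonoid.mem_top x)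
    have ha : a ∈ P := show φ a ∈ I by rwa [Fintype.linearCombination_apply]
    rw [hT, AddSemigroupIdeal.mem_closure''] at ha
    obtain ⟨y, z, hz, rfl⟩ := ha
    exact ⟨φ y, φ z, ⟨z, hz, rfl⟩, by rw [← map_add, Fintype.linearCombination_apply]⟩

def IsIdeal.reesCon {I : Set N} (hI : IsIdeal I) : AddCon N where
  r a b := a = b ∨ a ∈ I ∧ b ∈ I
  iseqv :=
    { refl := fun _ => .inl rfl
      symm := fun h => h.imp Eq.symm And.symm
      trans := by
        rintro a b c (rfl | ⟨ha, hb⟩) hbc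
        · exact hbc
        · rcases hbc with rfl | ⟨-, hc⟩
          exacts [.inr ⟨ha, hb⟩, .inr ⟨ha, hc⟩] }
  add' := by
    rintro a b c d (rfl | ⟨ha, hb⟩) hcd
    · rcases hcd with rfl | ⟨hc, hd⟩
      exacts [.inl rfl, .inr ⟨hI.2 c hc a, hI.2 d hd a⟩]
    · exact .inr ⟨hI.add_mem_right ha c, hI.add_mem_right hb d⟩

theorem IsIdeal.quotCon_eq {I : Set N} (hI : IsIdeal I) : quotCon I = hI.reesCon :=
  AddCon.addConGen_of_addCon hI.reesCon

namespace BQuot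

theorem mk_add (I : Set N) (a b : N) : mk I a + mk I b = mk I (a + b) := rfl

theorem mk_surjective (I : Set N) : Function.Surjective (mk I) :=
  AddCon.mk'_surjective (c := quotCon I)

theorem mk_eq_mk_iff_s9 {I : Set N} (hI : IsIdeal I) {a b : N} :
    mk I a = mk I b ↔ a = b ∨ a ∈ I ∧ b ∈ I := by
  change ((a : (quotCon I).Quotient) = b) ↔ _
  rw [AddCon.eq, hI.quotCon_eq]
  rfl

theorem injOn_mk {I : Set N} (hI : IsIdeal I) : Set.InjOn (mk I) Iᶜ :=
  fun _ ha _ _ h => ((mk_eq_mk_iff_s9 hI).1 h).resolve_right fun h => ha h.1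

theorem compl_extension_eq_image {I J : Set N} (hI : IsIdeal I) (hJ : IsIdeal J) :
    {y : BQuot I | ∃ a ∈ J, ∃ x : BQuot I, y = mk I a + x}ᶜ = mk I '' (Jᶜ \ I) := by
  ext y
  obtain ⟨b, rfl⟩ := mk_surjective I y
  constructor
  · intro hb
    refine ⟨b, ⟨fun hbJ => hb ⟨b, hbJ, mk I 0, by rw [mk_add, add_zero]⟩, fun hbI => ?_⟩, rfl⟩
    refine hb ⟨infty, hJ.1, mk I 0, ?_⟩
    rw [mk_add, add_zero, mk_eq_mk_iff_s9 hI]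
    exact .inr ⟨hbI, hI.1⟩
  · rintro ⟨c, ⟨hcJ, hcI⟩, hcb⟩ ⟨a, ha, x, hx⟩
    obtain ⟨n, rfl⟩ := mk_surjective I x
    rw [← hcb, mk_add, mk_eq_mk_iff_s9 hI] at hx
    rcases hx with rfl | ⟨hcI', -⟩
    exacts [hcJ (hJ.add_mem_right ha n), hcI hcI']

end BQuot

theorem finite_diff_idealSum (hfg : FG N) {I J : Set N} (hI : IsIdeal I) (hJ : (Jᶜ).Finite) :
    (I \ idealSum I J).Finite := by
  obtain ⟨B, hBI, hB, hIB⟩ := hI.exists_finite_generators hfg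
  refine ((hJ.prod hB).image fun p => p.1 + p.2).subset ?_
  rintro x ⟨hxI, hxIJ⟩
  obtain ⟨n, b, hb, rfl⟩ := hIB x hxI
  exact ⟨(n, b), ⟨fun hn => hxIJ ⟨b, hBI hb, n, hn, add_comm n b⟩, hb⟩, rfl⟩

end Binoid

theorem Set.ncard_compl_add_ncard_inter_diff {α : Type*} {I J S : Set α} (hSJ : S ⊆ J)
    (hJ : Jᶜ.Finite) (hIS : (I \ S).Finite) :
    Jᶜ.ncard + ((I ∩ J) \ S).ncard = (I \ S).ncard + (Jᶜ \ I).ncard := by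
  have hcompl := Set.ncard_inter_add_ncard_sdiff_eq_ncard Jᶜ I hJ
  have hdiff := Set.ncard_inter_add_ncard_sdiff_eq_ncard (I \ S) J hIS
  rw [Set.inter_comm, ← Set.sdiff_eq] at hcompl
  rw [← Set.inter_sdiff_right_comm, Set.sdiff_sdiff, Set.union_eq_right.2 hSJ] at hdiff
  omega

/-- **Statement 11.** Let `N` be a finitely generated, semipositive binoid, `I` an ideal of
`N` and `J` an `N₊`-primary ideal of `N`. Then the four sets underlying `N/J`,
`(I∩J)/(I+J)`, `I/(I+J)` and `(N/I)/(J+(N/I))` are finite (where the distinguished point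
is not counted) and `#(N/J) + #((I∩J)/(I+J)) = #(I/(I+J)) + #((N/I)/(J+(N/I)))`. -/
theorem euler_relation_of_ideals
    {N : Type*} [Binoid N]
    (hfg : FG N) (hsp : Semipositive N)
    (I J : Set N) (hI : IsIdeal I) (hJ : IsPrimaryIdeal J) :
    (Jᶜ).Finite ∧
    ((I ∩ J) \ idealSum I J).Finite ∧
    (I \ idealSum I J).Finite ∧
    ({y : BQuot I | ∃ a ∈ J, ∃ x : BQuot I, y = BQuot.mk I a + x}ᶜ).Finite ∧
    (Jᶜ).ncard + ((I ∩ J) \ idealSum I J).ncard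
      = (I \ idealSum I J).ncard
        + ({y : BQuot I | ∃ a ∈ J, ∃ x : BQuot I, y = BQuot.mk I a + x}ᶜ).ncard := by
  have hJc : (Jᶜ).Finite := finite_compl_of_plusSet_subset_rad hfg hsp hJ.1 hJ.2.ge
  have hIS : (I \ idealSum I J).Finite := finite_diff_idealSum hfg hI hJc
  rw [BQuot.compl_extension_eq_image hI hJ.1,
    ((BQuot.injOn_mk hI).mono (Set.sdiff_subset_compl _ _)).ncard_image]
  exact ⟨hJc, hIS.subset (Set.sdiff_subset_sdiff_left Set.inter_subset_left), hIS,
    hJc.sdiff.image _,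
    Set.ncard_compl_add_ncard_inter_diff (idealSum_subset_right hJ.1) hJc hIS⟩
end
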